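/- (Central functions are monic) Let (a,b,c) ∈ ℕ³ be admissible, set α := (−a+b+c)/2, β := (a−b+c)/2, γ := (a+b−c)/2 and δ := (a+b+c)/2, and suppose p is a polynomial in three variables y, x, z over ℂ satisfying χ_{a,b}^c(x₁,x₂) = p(tr(x₂), tr(x₁), tr(x₁x₂⁻¹)) for all x₁, x₂ ∈ SL(2,ℂ). Then p has total degree δ, the coefficient of the monomial y^α x^β z^γ in p equals 1, and every other monomial occurring in p has total degree strictly less than δ. -/

import Mathlib

/-!
Evaluate `χ` at `x₁ = [[s, 1], [0, s⁻¹]]` and `x₂ = [[t, 0], [u, t⁻¹]]`, where `t, s, u` will be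
the variables `X 0, X 1, X 2`. Then `tr x₂ = t + t⁻¹`, `tr x₁ = s + s⁻¹` and
`tr (x₁ x₂⁻¹) = s/t + t/s - u`, and since `ρ` of a triangular matrix is triangular,
`t^b s^a χ(x₁, x₂)` is an explicit polynomial `Q(t, s, u)`. Every monomial of `Q` has degree at
most `a + b + δ`, and the only one of that degree is `t^(b+α) s^(a+β) u^γ`, with coefficient
`(-1)^γ`.

On the other side, `t^N s^N p(t + t⁻¹, s + s⁻¹, s/t + t/s - u)` is a polynomial once `N ≥ deg p`,
and the monomial `y^d₀ x^d₁ z^d₂` of `p` contributes to it a polynomial whose top homogeneous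
component is the single monomial `(-1)^d₂ t^(N+d₀) s^(N+d₁) u^d₂`, coming from `t²`, `s²` and
`-stu` in the factors `t² + 1`, `s² + 1` and `s² + t² - stu`. So for a monomial `d` of `p` of
maximal degree, the coefficient of `t^(b+d₀) s^(a+d₁) u^d₂` in `Q` is `(-1)^d₂` times the
coefficient of `d` in `p`. Comparing with the shape of `Q` gives `deg p = δ`, the coefficient `1`
of `y^α x^β z^γ`, and no other monomial of degree `δ`.
-/

open Matrix Finset

noncomputable section

abbrev SL2 : Type := Matrix.SpecialLinearGroup (Fin 2) ℂ

/-- Matrix entry of the representation ρₙ on Vₙ in the basis `n_k = X^k Y^{n-k}`: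
`rhoFun n g l k` is the coefficient of `X^l Y^{n-l}` in
`(g₁₁ X + g₂₁ Y)^k (g₁₂ X + g₂₂ Y)^{n-k}`. -/
def rhoFun (n : ℕ) (g : SL2) (l k : ℕ) : ℂ :=
  MvPolynomial.coeff (Finsupp.single (0 : Fin 2) l + Finsupp.single (1 : Fin 2) (n - l))
    (MvPolynomial.aeval
      ![MvPolynomial.C (g.1 0 0) * MvPolynomial.X (0 : Fin 2) +
          MvPolynomial.C (g.1 1 0) * MvPolynomial.X 1,
        MvPolynomial.C (g.1 0 1) * MvPolynomial.X 0 +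
          MvPolynomial.C (g.1 1 1) * MvPolynomial.X 1]
      ((MvPolynomial.X (0 : Fin 2) : MvPolynomial (Fin 2) ℂ) ^ k * MvPolynomial.X 1 ^ (n - k)))

/-- A triple `(a,b,c)` of naturals is admissible: `(−a+b+c)/2, (a−b+c)/2, (a+b−c)/2 ∈ ℕ`. -/
def Admissible (a b c : ℕ) : Prop :=
  a ≤ b + c ∧ b ≤ a + c ∧ c ≤ a + b ∧ (a + b + c) % 2 = 0

instance : ∀ a b c : ℕ, Decidable (Admissible a b c) := fun a b c => by
  unfold Admissible; infer_instance

/-- The coefficient of `a_p ⊗ b_q` in `ι(c_k)`, where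
`ι : V_c → V_a ⊗ V_b` is the Clebsch-Gordan injection
`ι(c_k) = C(c,k)⁻¹ Σ (−1)^m C(β,i) C(α,j) C(γ,m) a_{i+γ−m} ⊗ b_{j+m}`
(with `α = (−a+b+c)/2`, `β = (a−b+c)/2`, `γ = (a+b−c)/2`). -/
def iotaCoeff (a b c k p q : ℕ) : ℂ :=
  ((c.choose k : ℂ))⁻¹ *
    ∑ i ∈ Finset.range ((a + c - b) / 2 + 1),
      ∑ j ∈ Finset.range ((b + c - a) / 2 + 1),
        ∑ m ∈ Finset.range ((a + b - c) / 2 + 1),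
          if i + j = k ∧ p = i + (a + b - c) / 2 - m ∧ q = j + m then
            (-1 : ℂ) ^ m * (((a + c - b) / 2).choose i : ℂ) *
              (((b + c - a) / 2).choose j : ℂ) * (((a + b - c) / 2).choose m : ℂ)
          else 0

/-- `Tcoeff a b c x₁ x₂ k p q` is the coefficient of `a_p ⊗ b_q` in
`(ρ_a(x₁) ⊗ ρ_b(x₂))(ι(c_k))`. -/
def Tcoeff (a b c : ℕ) (x₁ x₂ : SL2) (k p q : ℕ) : ℂ :=
  ∑ p' ∈ Finset.range (a + 1), ∑ q' ∈ Finset.range (b + 1),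
    rhoFun a x₁ p p' * rhoFun b x₂ q q' * iotaCoeff a b c k p' q'

/-- The central function `χ_{a,b}^c : SL(2,ℂ) × SL(2,ℂ) → ℂ`, defined to be `0` when
`(a,b,c)` is not admissible. -/
def centralFn (a b c : ℕ) (x₁ x₂ : SL2) : ℂ :=
  if Admissible a b c then
    ∑ k ∈ Finset.range (c + 1),
      ∑ i ∈ Finset.range ((a + c - b) / 2 + 1),
        ∑ j ∈ Finset.range ((b + c - a) / 2 + 1),
          ∑ m ∈ Finset.range ((a + b - c) / 2 + 1),
            if i + j = k then
              (-1 : ℂ) ^ m * (((a + c - b) / 2).choose i : ℂ) *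
                  (((b + c - a) / 2).choose j : ℂ) * (((a + b - c) / 2).choose m : ℂ) /
                  ((a.choose (i + (a + b - c) / 2 - m) : ℂ) * (b.choose (j + m) : ℂ)) *
                Tcoeff a b c x₁ x₂ k (i + (a + b - c) / 2 - m) (j + m)
            else 0
  else 0

namespace MvPolynomial

variable {σ R : Type*} [CommSemiring R]

theorem homogeneousComponent_mul_of_totalDegree_le {P Q : MvPolynomial σ R} {m n : ℕ}
    (hP : P.totalDegree ≤ m) (hQ : Q.totalDegree ≤ n) :
    homogeneousComponent (m + n) (P * Q) =
      homogeneousComponent m P * homogeneousComponent n Q := by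
  classical
  ext e
  simp only [coeff_homogeneousComponent, coeff_mul]
  split_ifs with he
  · refine Finset.sum_congr rfl fun x hx => ?_
    rw [Finset.HasAntidiagonal.mem_antidiagonal] at hx
    by_cases hPx : coeff x.1 P = 0
    · simp [hPx]
    by_cases hQx : coeff x.2 Q = 0
    · simp [hQx]
    have h1 : x.1.degree ≤ m := (le_totalDegree (mem_support_iff.mpr hPx)).trans hP
    have h2 : x.2.degree ≤ n := (le_totalDegree (mem_support_iff.mpr hQx)).trans hQ
    have : x.1.degree + x.2.degree = m + n := by rw [← map_add, hx, he]
    rw [if_pos (by omega), if_pos (by omega)]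
  · refine (Finset.sum_eq_zero fun x hx => ?_).symm
    rw [Finset.HasAntidiagonal.mem_antidiagonal] at hx
    split_ifs with h1 h2
    · exact absurd (by rw [← hx, map_add, h1, h2]) he
    all_goals simp

def IsTopComponent (n : ℕ) (P T : MvPolynomial σ R) : Prop :=
  P.totalDegree ≤ n ∧ homogeneousComponent n P = T

namespace IsTopComponent

variable {m n : ℕ} {P Q S T : MvPolynomial σ R}

theorem of_isHomogeneous (hP : P.IsHomogeneous n) : IsTopComponent n P P :=
  ⟨hP.totalDegree_le, homogeneousComponent_eq_self hP⟩

theorem add_of_totalDegree_lt (hP : IsTopComponent n P T) (hQ : Q.totalDegree < n) :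
    IsTopComponent n (P + Q) T :=
  ⟨(totalDegree_add P Q).trans (max_le hP.1 hQ.le), by
    rw [map_add, hP.2, homogeneousComponent_eq_zero _ _ hQ, add_zero]⟩

theorem mul (hP : IsTopComponent m P S) (hQ : IsTopComponent n Q T) :
    IsTopComponent (m + n) (P * Q) (S * T) :=
  ⟨(totalDegree_mul P Q).trans (add_le_add hP.1 hQ.1), by
    rw [homogeneousComponent_mul_of_totalDegree_le hP.1 hQ.1, hP.2, hQ.2]⟩

theorem pow (hP : IsTopComponent n P T) (k : ℕ) : IsTopComponent (n * k) (P ^ k) (T ^ k) := by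
  induction k with
  | zero => exact of_isHomogeneous (by simpa using isHomogeneous_one σ R)
  | succ k ih => simpa [pow_succ, mul_add] using ih.mul hP

theorem coeff_eq (hP : IsTopComponent n P T) {e : σ →₀ ℕ} (he : e.degree = n) :
    coeff e P = coeff e T := by
  rw [← hP.2, coeff_homogeneousComponent, if_pos he]

end IsTopComponent

end MvPolynomial

open MvPolynomial

lemma Finsupp.ext_fin_two {d e : Fin 2 →₀ ℕ} (h0 : d 0 = e 0) (h1 : d 1 = e 1) : d = e := by
  ext i; fin_cases i <;> assumption

lemma Finsupp.ext_fin_three {d e : Fin 3 →₀ ℕ} (h0 : d 0 = e 0) (h1 : d 1 = e 1)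
    (h2 : d 2 = e 2) : d = e := by
  ext i; fin_cases i <;> assumption

lemma Finsupp.degree_fin_three (d : Fin 3 →₀ ℕ) : d.degree = d 0 + d 1 + d 2 := by
  rw [Finsupp.degree_eq_sum, Fin.sum_univ_three]

def exp2 (x y : ℕ) : Fin 2 →₀ ℕ :=
  Finsupp.single 0 x + Finsupp.single 1 y

@[simp] lemma exp2_apply_zero (x y : ℕ) : exp2 x y 0 = x := by simp [exp2]

@[simp] lemma exp2_apply_one (x y : ℕ) : exp2 x y 1 = y := by simp [exp2]

lemma exp2_inj {x y x' y' : ℕ} : exp2 x y = exp2 x' y' ↔ x = x' ∧ y = y' :=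
  ⟨fun h => ⟨by simpa using DFunLike.congr_fun h 0, by simpa using DFunLike.congr_fun h 1⟩,
    fun ⟨h0, h1⟩ => h0 ▸ h1 ▸ rfl⟩

lemma exp2_le_exp2 {x y x' y' : ℕ} : exp2 x y ≤ exp2 x' y' ↔ x ≤ x' ∧ y ≤ y' := by
  simp [Finsupp.le_def, Fin.forall_fin_two]

lemma exp2_sub_exp2 (x y x' y' : ℕ) : exp2 x y - exp2 x' y' = exp2 (x - x') (y - y') :=
  Finsupp.ext_fin_two (by simp) (by simp)

lemma monomial_exp2 (x y : ℕ) (r : ℂ) : monomial (exp2 x y) r = C r * X 0 ^ x * X 1 ^ y := by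
  simp only [exp2, X_pow_eq_monomial, C_mul_monomial, monomial_mul, mul_one]

def exp3 (x y z : ℕ) : Fin 3 →₀ ℕ :=
  Finsupp.single 0 x + Finsupp.single 1 y + Finsupp.single 2 z

@[simp] lemma exp3_apply_zero (x y z : ℕ) : exp3 x y z 0 = x := by simp [exp3]

@[simp] lemma exp3_apply_one (x y z : ℕ) : exp3 x y z 1 = y := by simp [exp3]

@[simp] lemma exp3_apply_two (x y z : ℕ) : exp3 x y z 2 = z := by simp [exp3]

lemma eq_exp3 (d : Fin 3 →₀ ℕ) : d = exp3 (d 0) (d 1) (d 2) :=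
  Finsupp.ext_fin_three (by simp) (by simp) (by simp)

lemma exp3_inj {x y z x' y' z' : ℕ} :
    exp3 x y z = exp3 x' y' z' ↔ x = x' ∧ y = y' ∧ z = z' := by
  refine ⟨fun h => ⟨?_, ?_, ?_⟩, fun ⟨h0, h1, h2⟩ => h0 ▸ h1 ▸ h2 ▸ rfl⟩
  · simpa using DFunLike.congr_fun h 0
  · simpa using DFunLike.congr_fun h 1
  · simpa using DFunLike.congr_fun h 2

lemma exp3_add_exp3 (x y z x' y' z' : ℕ) :
    exp3 x y z + exp3 x' y' z' = exp3 (x + x') (y + y') (z + z') :=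
  Finsupp.ext_fin_three (by simp) (by simp) (by simp)

lemma degree_exp3 (x y z : ℕ) : (exp3 x y z).degree = x + y + z := by
  simp [Finsupp.degree_fin_three]

lemma monomial_exp3 (x y z : ℕ) (r : ℂ) :
    monomial (exp3 x y z) r = C r * X 0 ^ x * X 1 ^ y * X 2 ^ z := by
  simp only [exp3, X_pow_eq_monomial, C_mul_monomial, monomial_mul, mul_one]

lemma eval_monomial_exp3 (x : Fin 3 → ℂ) (i j k : ℕ) (r : ℂ) :
    eval x (monomial (exp3 i j k) r) = r * x 0 ^ i * x 1 ^ j * x 2 ^ k := by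
  simp [monomial_exp3]

def upperSL (s : ℂ) (hs : s ≠ 0) : SL2 :=
  ⟨!![s, 1; 0, s⁻¹], by simp [det_fin_two_of, hs]⟩

def lowerSL (t u : ℂ) (ht : t ≠ 0) : SL2 :=
  ⟨!![t, 0; u, t⁻¹], by simp [det_fin_two_of, ht]⟩

lemma trace_upperSL (s : ℂ) (hs : s ≠ 0) :
    trace (upperSL s hs : Matrix (Fin 2) (Fin 2) ℂ) = s + s⁻¹ := by
  simp [upperSL, trace_fin_two]

lemma trace_lowerSL (t u : ℂ) (ht : t ≠ 0) :
    trace (lowerSL t u ht : Matrix (Fin 2) (Fin 2) ℂ) = t + t⁻¹ := by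
  simp [lowerSL, trace_fin_two]

lemma trace_upperSL_mul_inv_lowerSL (s t u : ℂ) (hs : s ≠ 0) (ht : t ≠ 0) :
    trace ((upperSL s hs * (lowerSL t u ht)⁻¹ : SL2) : Matrix (Fin 2) (Fin 2) ℂ) =
      s * t⁻¹ + t * s⁻¹ - u := by
  rw [Matrix.SpecialLinearGroup.coe_mul, Matrix.SpecialLinearGroup.coe_inv]
  simp [upperSL, lowerSL, adjugate_fin_two, trace_fin_two]
  ring

lemma coeff_linear_pow (α β : ℂ) (m i j : ℕ) :
    coeff (exp2 i j) ((C α * X 0 + C β * X 1) ^ m) =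
      if i + j = m then (m.choose i : ℂ) * α ^ i * β ^ j else 0 := by
  have hterm : ∀ r, (C α * X 0) ^ r * (C β * X 1) ^ (m - r) *
      (m.choose r : MvPolynomial (Fin 2) ℂ) =
        monomial (exp2 r (m - r)) ((m.choose r : ℂ) * α ^ r * β ^ (m - r)) := fun r => by
    simp only [monomial_exp2, map_mul, map_pow, map_natCast]
    ring
  simp only [add_pow, coeff_sum, hterm, coeff_monomial, exp2_inj, ite_and, Finset.sum_ite_eq',
    Finset.mem_range]
  by_cases h : i + j = m
  · simp [h, show i < m + 1 by omega, show m - i = j by omega]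
  · grind

lemma rhoFun_eq_coeff (n : ℕ) (g : SL2) (l k : ℕ) :
    rhoFun n g l k = coeff (exp2 l (n - l))
      ((C (g.1 0 0) * X 0 + C (g.1 1 0) * X 1) ^ k *
        (C (g.1 0 1) * X 0 + C (g.1 1 1) * X 1) ^ (n - k)) := by
  simp only [rhoFun, map_mul, map_pow, aeval_X, Matrix.cons_val_zero, Matrix.cons_val_one]
  rfl

lemma rhoFun_upperSL (n l k : ℕ) (hl : l ≤ n) (s : ℂ) (hs : s ≠ 0) :
    s ^ n * rhoFun n (upperSL s hs) l k =
      if k ≤ l then ((n - k).choose (l - k) : ℂ) * s ^ (k + l) else 0 := by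
  have h : (C s * X 0 + C 0 * X 1 : MvPolynomial (Fin 2) ℂ) ^ k =
      monomial (exp2 k 0) (s ^ k) := by
    simp [monomial_exp2, mul_pow]
  rw [rhoFun_eq_coeff]
  change s ^ n * coeff _ ((C s * X 0 + C 0 * X 1) ^ k * (C 1 * X 0 + C s⁻¹ * X 1) ^ (n - k)) = _
  rw [h, coeff_monomial_mul', exp2_sub_exp2, coeff_linear_pow]
  by_cases hkl : k ≤ l
  · rw [if_pos (exp2_le_exp2.2 ⟨hkl, by omega⟩), if_pos (by omega), if_pos hkl]
    obtain ⟨r, rfl⟩ := Nat.exists_eq_add_of_le hl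
    rw [show l + r - k = (l - k) + r by omega, show l + r - l - 0 = r by omega, inv_pow]
    field_simp
    ring
  · rw [if_neg (fun h => hkl (exp2_le_exp2.1 h).1), if_neg hkl, mul_zero]

lemma rhoFun_lowerSL (n l k : ℕ) (hk : k ≤ n) (hl : l ≤ n) (t u : ℂ) (ht : t ≠ 0) :
    t ^ n * rhoFun n (lowerSL t u ht) l k =
      if l ≤ k then (k.choose l : ℂ) * t ^ (l + k) * u ^ (k - l) else 0 := by
  have h : (C 0 * X 0 + C t⁻¹ * X 1 : MvPolynomial (Fin 2) ℂ) ^ (n - k) =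
      monomial (exp2 0 (n - k)) (t⁻¹ ^ (n - k)) := by
    simp only [monomial_exp2, map_zero, zero_mul, zero_add, mul_pow, map_pow, pow_zero, mul_one]
  rw [rhoFun_eq_coeff]
  change t ^ n * coeff _ ((C t * X 0 + C u * X 1) ^ k * (C 0 * X 0 + C t⁻¹ * X 1) ^ (n - k)) = _
  rw [h, coeff_mul_monomial', exp2_sub_exp2, coeff_linear_pow]
  by_cases hlk : l ≤ k
  · rw [if_pos (exp2_le_exp2.2 ⟨by omega, by omega⟩), if_pos (by omega), if_pos hlk]
    obtain ⟨r, rfl⟩ := Nat.exists_eq_add_of_le hk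
    rw [show l - 0 = l by omega, show k + r - l - (k + r - k) = k - l by omega,
      show k + r - k = r by omega, inv_pow]
    field_simp
    ring
  · rw [if_neg (fun h => hlk (by have := (exp2_le_exp2.1 h).2; omega)), if_neg hlk, mul_zero]

def upperRhoPoly (a l k : ℕ) : MvPolynomial (Fin 3) ℂ :=
  if k ≤ l then monomial (exp3 0 (k + l) 0) ((a - k).choose (l - k)) else 0

def lowerRhoPoly (l k : ℕ) : MvPolynomial (Fin 3) ℂ :=
  if l ≤ k then monomial (exp3 (l + k) 0 (k - l)) (k.choose l) else 0

lemma eval_upperRhoPoly {a l : ℕ} (hl : l ≤ a) (k : ℕ) (x : Fin 3 → ℂ) (h1 : x 1 ≠ 0) :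
    eval x (upperRhoPoly a l k) = x 1 ^ a * rhoFun a (upperSL (x 1) h1) l k := by
  rw [rhoFun_upperSL a l k hl, upperRhoPoly]
  split_ifs <;> simp [eval_monomial_exp3]

lemma eval_lowerRhoPoly {b l k : ℕ} (hl : l ≤ b) (hk : k ≤ b) (x : Fin 3 → ℂ)
    (h0 : x 0 ≠ 0) :
    eval x (lowerRhoPoly l k) = x 0 ^ b * rhoFun b (lowerSL (x 0) (x 2) h0) l k := by
  rw [rhoFun_lowerSL b l k hk hl, lowerRhoPoly]
  split_ifs <;> simp [eval_monomial_exp3]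

lemma upperRhoPoly_mul_lowerRhoPoly (a p p' q q' : ℕ) :
    upperRhoPoly a p p' * lowerRhoPoly q q' =
      if p' ≤ p ∧ q ≤ q' then
        monomial (exp3 (q + q') (p' + p) (q' - q))
          (((a - p').choose (p - p') : ℂ) * (q'.choose q : ℂ))
      else 0 := by
  unfold upperRhoPoly lowerRhoPoly
  split_ifs <;> simp_all [monomial_mul, exp3_add_exp3]

def tcoeffPoly (a b c k p q : ℕ) : MvPolynomial (Fin 3) ℂ :=
  ∑ p' ∈ range (a + 1), ∑ q' ∈ range (b + 1),
    C (iotaCoeff a b c k p' q') * (upperRhoPoly a p p' * lowerRhoPoly q q')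

lemma eval_tcoeffPoly {a b p q : ℕ} (hp : p ≤ a) (hq : q ≤ b) (c k : ℕ) (x : Fin 3 → ℂ)
    (h0 : x 0 ≠ 0) (h1 : x 1 ≠ 0) :
    eval x (tcoeffPoly a b c k p q) =
      x 0 ^ b * x 1 ^ a * Tcoeff a b c (upperSL (x 1) h1) (lowerSL (x 0) (x 2) h0) k p q := by
  simp only [tcoeffPoly, Tcoeff, map_sum, Finset.mul_sum]
  refine Finset.sum_congr rfl fun p' _ => Finset.sum_congr rfl fun q' hq' => ?_
  rw [map_mul, map_mul, eval_C, eval_upperRhoPoly hp _ _ h1,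
    eval_lowerRhoPoly hq (by simpa [Nat.lt_succ_iff] using hq') _ h0]
  ring

def centralPolyTerm (a b c k i j m : ℕ) : MvPolynomial (Fin 3) ℂ :=
  if i + j = k then
    C ((-1 : ℂ) ^ m * (((a + c - b) / 2).choose i : ℂ) *
        (((b + c - a) / 2).choose j : ℂ) * (((a + b - c) / 2).choose m : ℂ) /
        ((a.choose (i + (a + b - c) / 2 - m) : ℂ) * (b.choose (j + m) : ℂ))) *
      tcoeffPoly a b c k (i + (a + b - c) / 2 - m) (j + m)
  else 0

def centralPoly (a b c : ℕ) : MvPolynomial (Fin 3) ℂ :=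
  ∑ k ∈ range (c + 1), ∑ i ∈ range ((a + c - b) / 2 + 1), ∑ j ∈ range ((b + c - a) / 2 + 1),
    ∑ m ∈ range ((a + b - c) / 2 + 1), centralPolyTerm a b c k i j m

lemma eval_centralPoly {a b c : ℕ} (h : Admissible a b c) (x : Fin 3 → ℂ) (h0 : x 0 ≠ 0)
    (h1 : x 1 ≠ 0) :
    eval x (centralPoly a b c) =
      x 0 ^ b * x 1 ^ a * centralFn a b c (upperSL (x 1) h1) (lowerSL (x 0) (x 2) h0) := by
  simp only [centralFn, if_pos h, centralPoly, map_sum, Finset.mul_sum]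
  obtain ⟨hab, hba, hc, -⟩ := h
  refine Finset.sum_congr rfl fun k _ => Finset.sum_congr rfl fun i hi =>
    Finset.sum_congr rfl fun j hj => Finset.sum_congr rfl fun m hm => ?_
  simp only [Finset.mem_range] at hi hj hm
  rw [centralPolyTerm]
  split_ifs
  · rw [map_mul, eval_C, eval_tcoeffPoly (by omega) (by omega) c k x h0 h1]
    ring
  · simp

lemma exists_of_iotaCoeff_ne_zero {a b c k p q : ℕ} (h : iotaCoeff a b c k p q ≠ 0) :
    ∃ i j m, i ≤ (a + c - b) / 2 ∧ j ≤ (b + c - a) / 2 ∧ m ≤ (a + b - c) / 2 ∧ i + j = k ∧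
      p = i + (a + b - c) / 2 - m ∧ q = j + m := by
  obtain ⟨i, hi, h⟩ := Finset.exists_ne_zero_of_sum_ne_zero (right_ne_zero_of_mul h)
  obtain ⟨j, hj, h⟩ := Finset.exists_ne_zero_of_sum_ne_zero h
  obtain ⟨m, hm, h⟩ := Finset.exists_ne_zero_of_sum_ne_zero h
  simp only [Finset.mem_range] at hi hj hm
  split_ifs at h with hcond
  · exact ⟨i, j, m, by omega, by omega, by omega, hcond⟩
  · exact absurd rfl h

lemma coeff_tcoeffPoly_summand_ne_zero {a b c k p q p' q' : ℕ} {e : Fin 3 →₀ ℕ}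
    (he : coeff e (C (iotaCoeff a b c k p' q') * (upperRhoPoly a p p' * lowerRhoPoly q q')) ≠ 0) :
    p' ≤ p ∧ q ≤ q' ∧ e = exp3 (q + q') (p' + p) (q' - q) ∧ iotaCoeff a b c k p' q' ≠ 0 := by
  rw [coeff_C_mul, upperRhoPoly_mul_lowerRhoPoly] at he
  split_ifs at he with hpq
  · rw [coeff_monomial] at he
    split_ifs at he with hexp
    · exact ⟨hpq.1, hpq.2, hexp.symm, left_ne_zero_of_mul he⟩
    · simp at he
  · simp at he

def topExp (a b c : ℕ) : Fin 3 →₀ ℕ :=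
  exp3 (b + (b + c - a) / 2) (a + (a + c - b) / 2) ((a + b - c) / 2)

lemma degree_of_coeff_centralPolyTerm_ne_zero {a b c k i j m : ℕ} (h : Admissible a b c)
    (hi : i ≤ (a + c - b) / 2) {e : Fin 3 →₀ ℕ}
    (he : coeff e (centralPolyTerm a b c k i j m) ≠ 0) :
    e.degree ≤ a + b + (a + b + c) / 2 ∧
      (a + b + (a + b + c) / 2 ≤ e.degree → e = topExp a b c ∧
        k = c ∧ i = (a + c - b) / 2 ∧ j = (b + c - a) / 2 ∧ m = 0) := by
  unfold centralPolyTerm at he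
  split_ifs at he with hk
  swap
  · simp at he
  rw [coeff_C_mul, tcoeffPoly, coeff_sum] at he
  obtain ⟨p', hp', he⟩ := Finset.exists_ne_zero_of_sum_ne_zero (right_ne_zero_of_mul he)
  rw [coeff_sum] at he
  obtain ⟨q', hq', he⟩ := Finset.exists_ne_zero_of_sum_ne_zero he
  obtain ⟨hp'p, hqq', rfl, hiota⟩ := coeff_tcoeffPoly_summand_ne_zero he
  obtain ⟨i', j', m', hi', hj', hm', hk', rfl, rfl⟩ := exists_of_iotaCoeff_ne_zero hiota
  obtain ⟨hab, hba, hcab, hpar⟩ := h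
  rw [degree_exp3, topExp, exp3_inj]
  -- the degree is `2i + j + j' + 2γ + m' - m ≤ 2α + 2β + 3γ` (using `i' + j' = i + j`),
  -- with equality only for `i = β`, `j = j' = α`, `m = 0`, `m' = γ`
  omega

lemma iotaCoeff_top {a b c : ℕ} (h : Admissible a b c) :
    iotaCoeff a b c c ((a + c - b) / 2) b = (-1) ^ ((a + b - c) / 2) := by
  obtain ⟨hab, hba, hcab, hpar⟩ := h
  rw [iotaCoeff, Nat.choose_self, Nat.cast_one, inv_one, one_mul,
    Finset.sum_eq_single_of_mem ((a + c - b) / 2) (by simp) fun i hi hne =>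
      Finset.sum_eq_zero fun j hj => Finset.sum_eq_zero fun m hm =>
        if_neg (by simp only [Finset.mem_range] at hi hj hm; omega),
    Finset.sum_eq_single_of_mem ((b + c - a) / 2) (by simp) fun j hj hne =>
      Finset.sum_eq_zero fun m hm => if_neg (by simp only [Finset.mem_range] at hj hm; omega),
    Finset.sum_eq_single_of_mem ((a + b - c) / 2) (by simp) fun m hm hne =>
      if_neg (by simp only [Finset.mem_range] at hm; omega),
    if_pos (by omega)]
  simp

lemma coeff_topExp_centralPolyTerm {a b c : ℕ} (h : Admissible a b c) :
    coeff (topExp a b c)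
      (centralPolyTerm a b c c ((a + c - b) / 2) ((b + c - a) / 2) 0) =
      (-1) ^ ((a + b - c) / 2) := by
  have hsummand : ∀ p' q', coeff (topExp a b c) (C (iotaCoeff a b c c p' q') *
      (upperRhoPoly a ((a + c - b) / 2 + (a + b - c) / 2 - 0) p' *
        lowerRhoPoly ((b + c - a) / 2 + 0) q')) ≠ 0 →
      p' = (a + c - b) / 2 ∧ q' = b := fun p' q' hne => by
    obtain ⟨-, -, he, -⟩ := coeff_tcoeffPoly_summand_ne_zero hne
    obtain ⟨hab, hba, hcab, hpar⟩ := h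
    rw [topExp, exp3_inj] at he
    omega
  obtain ⟨hab, hba, hcab, hpar⟩ := id h
  have hb : (b.choose ((b + c - a) / 2) : ℂ) ≠ 0 := by
    exact_mod_cast (Nat.choose_pos (by omega)).ne'
  rw [centralPolyTerm, if_pos (by omega), coeff_C_mul, tcoeffPoly, coeff_sum,
    Finset.sum_eq_single_of_mem ((a + c - b) / 2) (by simp; omega) fun p' _ hne =>
      by rw [coeff_sum]; exact Finset.sum_eq_zero fun q' _ =>
        by_contra fun h' => hne (hsummand p' q' h').1,
    coeff_sum, Finset.sum_eq_single_of_mem b (by simp) fun q' _ hne =>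
      by_contra fun h' => hne (hsummand _ q' h').2,
    coeff_C_mul, upperRhoPoly_mul_lowerRhoPoly, if_pos (by omega), coeff_monomial,
    if_pos (by rw [topExp, exp3_inj]; omega), iotaCoeff_top h,
    show (a + c - b) / 2 + (a + b - c) / 2 - 0 = a by omega,
    show a - (a + c - b) / 2 = (a + b - c) / 2 by omega]
  simp only [Nat.choose_self, add_zero, Nat.choose_zero_right, pow_zero]
  field_simp
  simp

lemma degree_topExp {a b c : ℕ} (h : Admissible a b c) :
    (topExp a b c).degree = a + b + (a + b + c) / 2 := by
  obtain ⟨hab, hba, hcab, hpar⟩ := h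
  rw [topExp, degree_exp3]
  omega

lemma degree_of_coeff_centralPoly_ne_zero {a b c : ℕ} (h : Admissible a b c) {e : Fin 3 →₀ ℕ}
    (he : coeff e (centralPoly a b c) ≠ 0) :
    e.degree ≤ a + b + (a + b + c) / 2 ∧
      (a + b + (a + b + c) / 2 ≤ e.degree → e = topExp a b c) := by
  simp only [centralPoly, coeff_sum] at he
  obtain ⟨k, -, he⟩ := Finset.exists_ne_zero_of_sum_ne_zero he
  obtain ⟨i, hi, he⟩ := Finset.exists_ne_zero_of_sum_ne_zero he
  obtain ⟨j, -, he⟩ := Finset.exists_ne_zero_of_sum_ne_zero he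
  obtain ⟨m, -, he⟩ := Finset.exists_ne_zero_of_sum_ne_zero he
  obtain ⟨hle, htop⟩ :=
    degree_of_coeff_centralPolyTerm_ne_zero h (Finset.mem_range_succ_iff.mp hi) he
  exact ⟨hle, fun hge => (htop hge).1⟩

lemma coeff_topExp_centralPoly {a b c : ℕ} (h : Admissible a b c) :
    coeff (topExp a b c) (centralPoly a b c) = (-1) ^ ((a + b - c) / 2) := by
  have hvanish : ∀ k, ∀ i ∈ range ((a + c - b) / 2 + 1), ∀ j m,
      ¬(k = c ∧ i = (a + c - b) / 2 ∧ j = (b + c - a) / 2 ∧ m = 0) →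
      coeff (topExp a b c) (centralPolyTerm a b c k i j m) = 0 := fun k i hi j m hne =>
    by_contra fun he => hne ((degree_of_coeff_centralPolyTerm_ne_zero h
      (Finset.mem_range_succ_iff.mp hi) he).2 (degree_topExp h).ge).2
  simp only [centralPoly, coeff_sum]
  rw [Finset.sum_eq_single_of_mem c (by simp) fun k _ hk =>
      Finset.sum_eq_zero fun i hi => Finset.sum_eq_zero fun j _ => Finset.sum_eq_zero fun m _ =>
        hvanish k i hi j m (by tauto),
    Finset.sum_eq_single_of_mem ((a + c - b) / 2) (by simp) fun i hi hne =>
      Finset.sum_eq_zero fun j _ => Finset.sum_eq_zero fun m _ => hvanish c i hi j m (by tauto),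
    Finset.sum_eq_single_of_mem ((b + c - a) / 2) (by simp) fun j _ hj =>
      Finset.sum_eq_zero fun m _ => hvanish c _ (by simp) j m (by tauto),
    Finset.sum_eq_single_of_mem 0 (by simp) fun m _ hm => hvanish c _ (by simp) _ m (by tauto)]
  exact coeff_topExp_centralPolyTerm h

lemma isTopComponent_X_sq_add_one (i : Fin 3) :
    IsTopComponent 2 (X i ^ 2 + 1 : MvPolynomial (Fin 3) ℂ) (X i ^ 2) :=
  (IsTopComponent.of_isHomogeneous (isHomogeneous_X_pow i 2)).add_of_totalDegree_lt (by simp)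

lemma isTopComponent_sq_add_sq_sub_mul :
    IsTopComponent 3 (X 0 ^ 2 + X 1 ^ 2 - X 0 * X 1 * X 2 : MvPolynomial (Fin 3) ℂ)
      (-(X 0 * X 1 * X 2)) := by
  rw [show (X 0 ^ 2 + X 1 ^ 2 - X 0 * X 1 * X 2 : MvPolynomial (Fin 3) ℂ) =
    -(X 0 * X 1 * X 2) + (X 0 ^ 2 + X 1 ^ 2) by ring]
  refine IsTopComponent.add_of_totalDegree_lt (.of_isHomogeneous ?_) ?_
  · exact (((isHomogeneous_X ℂ 0).mul (isHomogeneous_X ℂ 1)).mul (isHomogeneous_X ℂ 2)).neg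
  · exact ((totalDegree_add _ _).trans (max_le (totalDegree_X_pow 0 2).le
      (totalDegree_X_pow 1 2).le)).trans_lt (by norm_num)

def clearedMonomial (N : ℕ) (d : Fin 3 →₀ ℕ) : MvPolynomial (Fin 3) ℂ :=
  X 0 ^ (N - d 0 - d 2) * X 1 ^ (N - d 1 - d 2) * (X 0 ^ 2 + 1) ^ d 0 * (X 1 ^ 2 + 1) ^ d 1 *
    (X 0 ^ 2 + X 1 ^ 2 - X 0 * X 1 * X 2) ^ d 2

lemma eval_clearedMonomial {N : ℕ} {d : Fin 3 →₀ ℕ} (hd : d.degree ≤ N) (x : Fin 3 → ℂ)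
    (h0 : x 0 ≠ 0) (h1 : x 1 ≠ 0) :
    eval x (clearedMonomial N d) = x 0 ^ N * x 1 ^ N *
      ∏ i, ![x 0 + (x 0)⁻¹, x 1 + (x 1)⁻¹, x 1 * (x 0)⁻¹ + x 0 * (x 1)⁻¹ - x 2] i ^ d i := by
  rw [Finsupp.degree_fin_three] at hd
  obtain ⟨r0, hr0⟩ : ∃ r, N = r + d 0 + d 2 := ⟨N - d 0 - d 2, by omega⟩
  obtain ⟨r1, hr1⟩ : ∃ r, N = r + d 1 + d 2 := ⟨N - d 1 - d 2, by omega⟩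
  have e0 : x 0 ^ 2 + 1 = x 0 * (x 0 + (x 0)⁻¹) := by field_simp
  have e1 : x 1 ^ 2 + 1 = x 1 * (x 1 + (x 1)⁻¹) := by field_simp
  have e2 : x 0 ^ 2 + x 1 ^ 2 - x 0 * x 1 * x 2 =
      x 0 * x 1 * (x 1 * (x 0)⁻¹ + x 0 * (x 1)⁻¹ - x 2) := by field_simp; ring
  simp only [clearedMonomial, map_mul, map_pow, map_add, map_sub, map_one, eval_X,
    Fin.prod_univ_three, Matrix.cons_val_zero, Matrix.cons_val_one, Matrix.cons_val_two,
    Matrix.head_cons, Matrix.tail_cons]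
  rw [e0, e1, e2, show N - d 0 - d 2 = r0 by omega, show N - d 1 - d 2 = r1 by omega,
    show x 0 ^ N = x 0 ^ (r0 + d 0 + d 2) by rw [← hr0],
    show x 1 ^ N = x 1 ^ (r1 + d 1 + d 2) by rw [← hr1]]
  simp only [mul_pow]
  ring

lemma isTopComponent_clearedMonomial {N : ℕ} {d : Fin 3 →₀ ℕ} (hd : d.degree ≤ N) :
    IsTopComponent (2 * N + d.degree) (clearedMonomial N d)
      (monomial (d + exp3 N N 0) ((-1) ^ d 2)) := by
  have htop := (((((IsTopComponent.of_isHomogeneous (isHomogeneous_X_pow 0 (N - d 0 - d 2))).mul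
    (.of_isHomogeneous (isHomogeneous_X_pow 1 (N - d 1 - d 2)))).mul
    ((isTopComponent_X_sq_add_one 0).pow (d 0))).mul
    ((isTopComponent_X_sq_add_one 1).pow (d 1))).mul (isTopComponent_sq_add_sq_sub_mul.pow (d 2)))
  rw [Finsupp.degree_fin_three] at hd ⊢
  unfold clearedMonomial
  convert htop using 1
  · omega
  · obtain ⟨r0, hr0⟩ : ∃ r, N = r + d 0 + d 2 := ⟨N - d 0 - d 2, by omega⟩
    obtain ⟨r1, hr1⟩ : ∃ r, N = r + d 1 + d 2 := ⟨N - d 1 - d 2, by omega⟩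
    conv_lhs => rw [eq_exp3 d, exp3_add_exp3, monomial_exp3]
    simp only [exp3_apply_two]
    rw [show N - d 0 - d 2 = r0 by omega, show N - d 1 - d 2 = r1 by omega,
      show d 0 + N = r0 + 2 * d 0 + d 2 by omega, show d 1 + N = r1 + 2 * d 1 + d 2 by omega]
    simp only [map_pow, map_neg, map_one]
    ring

lemma coeff_clearedMonomial {N : ℕ} {d d' : Fin 3 →₀ ℕ} (hN : d'.degree ≤ N)
    (hd : d'.degree ≤ d.degree) :
    coeff (d + exp3 N N 0) (clearedMonomial N d') = if d' = d then (-1) ^ d 2 else 0 := by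
  have htop := isTopComponent_clearedMonomial hN
  have hdeg : (d + exp3 N N 0).degree = 2 * N + d.degree := by
    rw [map_add, degree_exp3]; ring
  rcases hd.lt_or_eq with hlt | heq
  · rw [coeff_eq_zero_of_totalDegree_lt (htop.1.trans_lt (by change _ < Finsupp.degree _; omega)),
      if_neg (by rintro rfl; exact hlt.ne rfl)]
  · rw [htop.coeff_eq (by rw [hdeg, heq]), coeff_monomial]
    simp only [add_left_inj]
    split_ifs with h
    · rw [h]
    · rfl

def clearedPoly (N : ℕ) (p : MvPolynomial (Fin 3) ℂ) : MvPolynomial (Fin 3) ℂ :=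
  ∑ d ∈ p.support, C (coeff d p) * clearedMonomial N d

lemma eval_clearedPoly {N : ℕ} {p : MvPolynomial (Fin 3) ℂ} (hN : p.totalDegree ≤ N)
    (x : Fin 3 → ℂ) (h0 : x 0 ≠ 0) (h1 : x 1 ≠ 0) :
    eval x (clearedPoly N p) = x 0 ^ N * x 1 ^ N *
      eval ![x 0 + (x 0)⁻¹, x 1 + (x 1)⁻¹, x 1 * (x 0)⁻¹ + x 0 * (x 1)⁻¹ - x 2] p := by
  rw [clearedPoly, map_sum, eval_eq', Finset.mul_sum]
  refine Finset.sum_congr rfl fun d hd => ?_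
  rw [map_mul, eval_C, eval_clearedMonomial ((le_totalDegree hd).trans hN) x h0 h1]
  ring

lemma coeff_clearedPoly {N : ℕ} {p : MvPolynomial (Fin 3) ℂ} (hN : p.totalDegree ≤ N)
    {d : Fin 3 →₀ ℕ} (hd : ∀ d' ∈ p.support, d'.degree ≤ d.degree) :
    coeff (d + exp3 N N 0) (clearedPoly N p) = (-1) ^ d 2 * coeff d p := by
  rw [clearedPoly, coeff_sum, Finset.sum_congr rfl fun d' hd' => by
    rw [coeff_C_mul, coeff_clearedMonomial ((le_totalDegree hd').trans hN) (hd d' hd')]]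
  simp only [mul_ite, mul_zero, Finset.sum_ite_eq']
  split_ifs with h
  · ring
  · rw [notMem_support_iff.mp h, mul_zero]

def IsTracePolynomial (a b c : ℕ) (p : MvPolynomial (Fin 3) ℂ) : Prop :=
  ∀ x₁ x₂ : SL2, centralFn a b c x₁ x₂ =
    eval ![trace (x₂ : Matrix (Fin 2) (Fin 2) ℂ), trace (x₁ : Matrix (Fin 2) (Fin 2) ℂ),
      trace ((x₁ * x₂⁻¹ : SL2) : Matrix (Fin 2) (Fin 2) ℂ)] p

lemma IsTracePolynomial.monomial_mul_clearedPoly {a b c : ℕ} {p : MvPolynomial (Fin 3) ℂ}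
    (hp : IsTracePolynomial a b c p) (h : Admissible a b c) {N : ℕ} (hN : p.totalDegree ≤ N) :
    monomial (exp3 b a 0) 1 * clearedPoly N p = monomial (exp3 N N 0) 1 * centralPoly a b c := by
  refine funext_set (fun _ => {0}ᶜ) (fun _ => (Set.finite_singleton 0).infinite_compl)
    fun x hx => ?_
  have h0 : x 0 ≠ 0 := hx 0 trivial
  have h1 : x 1 ≠ 0 := hx 1 trivial
  rw [map_mul, map_mul, eval_monomial_exp3, eval_monomial_exp3, eval_clearedPoly hN x h0 h1,
    eval_centralPoly h x h0 h1, hp, trace_upperSL, trace_lowerSL, trace_upperSL_mul_inv_lowerSL]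
  ring

lemma IsTracePolynomial.coeff_centralPoly {a b c : ℕ} {p : MvPolynomial (Fin 3) ℂ}
    (hp : IsTracePolynomial a b c p) (h : Admissible a b c) {d : Fin 3 →₀ ℕ}
    (hd : ∀ d' ∈ p.support, d'.degree ≤ d.degree) :
    coeff (d + exp3 b a 0) (centralPoly a b c) = (-1) ^ d 2 * coeff d p := by
  obtain ⟨N, hN⟩ : ∃ N, p.totalDegree ≤ N := ⟨_, le_rfl⟩
  calc coeff (d + exp3 b a 0) (centralPoly a b c)
      = coeff (exp3 N N 0 + (d + exp3 b a 0)) (monomial (exp3 N N 0) 1 * centralPoly a b c) := by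
        rw [coeff_monomial_mul, one_mul]
    _ = coeff (exp3 b a 0 + (d + exp3 N N 0)) (monomial (exp3 b a 0) 1 * clearedPoly N p) := by
        rw [hp.monomial_mul_clearedPoly h hN]
        congr 1
        abel
    _ = (-1) ^ d 2 * coeff d p := by rw [coeff_monomial_mul, one_mul, coeff_clearedPoly hN hd]

lemma IsTracePolynomial.coeff_centralPoly_ne_zero {a b c : ℕ} {p : MvPolynomial (Fin 3) ℂ}
    (hp : IsTracePolynomial a b c p) (h : Admissible a b c) {d : Fin 3 →₀ ℕ} (hd : d ∈ p.support)
    (hmax : ∀ d' ∈ p.support, d'.degree ≤ d.degree) :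
    coeff (d + exp3 b a 0) (centralPoly a b c) ≠ 0 := by
  rw [hp.coeff_centralPoly h hmax]
  exact mul_ne_zero (pow_ne_zero _ (by norm_num)) (mem_support_iff.mp hd)

lemma IsTracePolynomial.totalDegree_le {a b c : ℕ} {p : MvPolynomial (Fin 3) ℂ}
    (hp : IsTracePolynomial a b c p) (h : Admissible a b c) :
    p.totalDegree ≤ (a + b + c) / 2 := by
  obtain rfl | hp0 := eq_or_ne p 0
  · simp
  obtain ⟨d, hd, hdeg⟩ := Finset.exists_mem_eq_sup _ (support_nonempty.mpr hp0) Finsupp.degree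
  have := (degree_of_coeff_centralPoly_ne_zero h
    (hp.coeff_centralPoly_ne_zero h hd fun d' hd' => hdeg ▸ le_totalDegree hd')).1
  rw [map_add, degree_exp3] at this
  change p.support.sup Finsupp.degree ≤ _
  omega

/-- Central functions are monic: if `χ_{a,b}^c = p(tr(x₂), tr(x₁), tr(x₁x₂⁻¹))` with
`(a,b,c)` admissible, then `p` has total degree `δ = (a+b+c)/2`, the monomial
`y^α x^β z^γ` (with `α = (−a+b+c)/2`, `β = (a−b+c)/2`, `γ = (a+b−c)/2`) has
coefficient `1`, and every other monomial of `p` has total degree `< δ`. -/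
theorem centralFn_monic (a b c : ℕ) (h : Admissible a b c) (p : MvPolynomial (Fin 3) ℂ)
    (hp : ∀ x₁ x₂ : SL2, centralFn a b c x₁ x₂ =
      MvPolynomial.eval
        ![Matrix.trace (x₂ : Matrix (Fin 2) (Fin 2) ℂ),
          Matrix.trace (x₁ : Matrix (Fin 2) (Fin 2) ℂ),
          Matrix.trace ((x₁ * x₂⁻¹ : SL2) : Matrix (Fin 2) (Fin 2) ℂ)] p) :
    p.totalDegree = (a + b + c) / 2 ∧
    MvPolynomial.coeff
      (Finsupp.single (0 : Fin 3) ((b + c - a) / 2) +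
        Finsupp.single (1 : Fin 3) ((a + c - b) / 2) +
        Finsupp.single (2 : Fin 3) ((a + b - c) / 2)) p = 1 ∧
    ∀ d ∈ p.support,
      d ≠ (Finsupp.single (0 : Fin 3) ((b + c - a) / 2) +
            Finsupp.single (1 : Fin 3) ((a + c - b) / 2) +
            Finsupp.single (2 : Fin 3) ((a + b - c) / 2)) →
        (d.sum fun _ e => e) < (a + b + c) / 2 := by
  change p.totalDegree = _ ∧ coeff (exp3 _ _ _) p = 1 ∧
    ∀ d ∈ p.support, d ≠ exp3 _ _ _ → d.degree < _
  replace hp : IsTracePolynomial a b c p := hp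
  set dstar := exp3 ((b + c - a) / 2) ((a + c - b) / 2) ((a + b - c) / 2)
  obtain ⟨hab, hba, hcab, hpar⟩ := id h
  have hshift : dstar + exp3 b a 0 = topExp a b c := by
    rw [exp3_add_exp3, topExp, exp3_inj]; omega
  have hdstar : dstar.degree = (a + b + c) / 2 := by rw [degree_exp3]; omega
  have hdeg_le : p.totalDegree ≤ (a + b + c) / 2 := hp.totalDegree_le h
  have hcoeff : coeff dstar p = 1 := by
    have := hp.coeff_centralPoly h (d := dstar) fun d' hd' =>
      (le_totalDegree hd').trans (hdeg_le.trans hdstar.ge)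
    rw [hshift, coeff_topExp_centralPoly h, exp3_apply_two] at this
    exact mul_left_cancel₀ (pow_ne_zero _ (by norm_num)) (this.symm.trans (mul_one _).symm)
  refine ⟨le_antisymm hdeg_le (hdstar ▸ le_totalDegree (by simp [hcoeff])), hcoeff,
    fun d hd hne => ((le_totalDegree hd).trans hdeg_le).lt_of_ne fun heq => hne ?_⟩
  have htop := (degree_of_coeff_centralPoly_ne_zero h (hp.coeff_centralPoly_ne_zero h hd
    fun d' hd' => (le_totalDegree hd').trans (hdeg_le.trans heq.ge))).2
    (by rw [map_add, degree_exp3]; change d.degree = _ at heq; omega)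
  exact add_right_cancel (htop.trans hshift.symm)

end
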